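/- Let τ > 0 and let u : ℝ → ℂ be integrable and continuous. Let w(λ) = ∫_{ℝ} exp(−iλξ) · u(ξ) dξ be its Fourier transform, and assume that λ ↦ exp(τλ²) · w(λ) is integrable on ℝ. Define f(x) = (1/(2π)) · ∫_{ℝ} exp(τλ²) · exp(iλx) · w(λ) dλ, and assume f is integrable. Then for every x ∈ ℝ, ∫_{ℝ} (1/(2√(πτ))) · exp(−(x−ξ)²/(4τ)) · f(ξ) dξ = u(x). (Existence part of Theorem 1 in the homogeneous case: formula (9) with φ(x,λ) = e^{iλx} solves the retrospective heat problem.) -/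

import Mathlib

open MeasureTheory Real

/-!
Substitute the formula for `f` and exchange the two integrals; Fubini applies because the heat
kernel is integrable in `ξ`, `exp(τλ²) w(λ)` is integrable in `λ`, and `|exp(iλξ)| = 1`. The inner
integral is the Fourier transform of the Gaussian, `exp(iλx) exp(-τλ²)`, whose second factor
cancels the regularizing factor `exp(τλ²)`. What is left is the Fourier inversion formula for `u`,
valid because `u` is continuous and integrable and `|w| ≤ |exp(τλ²) w|` is integrable.
-/

noncomputable def heatKernel (τ y : ℝ) : ℂ :=
  (1 / (2 * Real.sqrt (π * τ)) : ℂ) * Complex.exp (-(y : ℂ) ^ 2 / (4 * τ))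

lemma heatKernel_sub_mul_cexp {τ : ℝ} (hτ : τ ≠ 0) (x lam ξ : ℝ) :
    heatKernel τ (x - ξ) * Complex.exp (Complex.I * lam * ξ) =
      (1 / (2 * Real.sqrt (π * τ)) : ℂ) * Complex.exp (-((1 / (4 * τ) : ℝ) : ℂ) * ξ ^ 2 +
        (x / (2 * τ) + Complex.I * lam) * ξ + -(x : ℂ) ^ 2 / (4 * τ)) := by
  have hτ0 : (τ : ℂ) ≠ 0 := by exact_mod_cast hτ
  rw [heatKernel, mul_assoc, ← Complex.exp_add]
  congr 2
  push_cast
  field_simp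
  ring

lemma integrable_heatKernel_sub {τ : ℝ} (hτ : 0 < τ) (x : ℝ) :
    Integrable fun ξ : ℝ => heatKernel τ (x - ξ) := by
  have h := (integrable_cexp_quadratic (b := (1 / (4 * τ) : ℝ))
    (by rw [Complex.ofReal_re]; positivity) (x / (2 * τ)) (-(x : ℂ) ^ 2 / (4 * τ))).const_mul
    (1 / (2 * Real.sqrt (π * τ)) : ℂ)
  refine h.congr (ae_of_all _ fun ξ => ?_)
  simpa using (heatKernel_sub_mul_cexp hτ.ne' x 0 ξ).symm

lemma integral_heatKernel_sub_mul_cexp {τ : ℝ} (hτ : 0 < τ) (x lam : ℝ) :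
    ∫ ξ : ℝ, heatKernel τ (x - ξ) * Complex.exp (Complex.I * lam * ξ) =
      Complex.exp (Complex.I * lam * x) * Complex.exp (-(τ * lam ^ 2)) := by
  have hτ0 : (τ : ℂ) ≠ 0 := by exact_mod_cast hτ.ne'
  simp_rw [heatKernel_sub_mul_cexp hτ.ne' x lam, integral_const_mul]
  rw [integral_cexp_quadratic (by rw [Complex.neg_re, Complex.ofReal_re, neg_lt_zero]; positivity)]
  have hsqrt : ((π : ℂ) / -(-((1 / (4 * τ) : ℝ) : ℂ))) ^ (1 / 2 : ℂ) = 2 * Real.sqrt (π * τ) := by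
    have h4 : (π : ℂ) / -(-((1 / (4 * τ) : ℝ) : ℂ)) = (2 * Real.sqrt (π * τ) : ℂ) ^ 2 := by
      rw [mul_pow, ← Complex.ofReal_pow, Real.sq_sqrt (by positivity)]
      push_cast
      field_simp
      ring
    rw [h4, one_div, Complex.sq_cpow_two_inv (by norm_cast; positivity)]
  have hC : (2 * Real.sqrt (π * τ) : ℂ) ≠ 0 := by
    have : 0 < 2 * Real.sqrt (π * τ) := by positivity
    exact_mod_cast this.ne'
  rw [hsqrt, ← mul_assoc, one_div_mul_cancel hC, one_mul, ← Complex.exp_add]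
  congr 1
  push_cast
  field_simp
  ring_nf
  rw [Complex.I_sq]
  ring

noncomputable def angularFourier (u : ℝ → ℂ) (lam : ℝ) : ℂ :=
  ∫ ξ : ℝ, Complex.exp (-Complex.I * lam * ξ) * u ξ

open FourierTransform in
lemma fourier_eq_angularFourier (u : ℝ → ℂ) (s : ℝ) :
    𝓕 u s = angularFourier u (2 * π * s) := by
  rw [Real.fourier_real_eq_integral_exp_smul, angularFourier]
  congr 1 with ξ
  rw [smul_eq_mul]
  push_cast
  ring_nf

open FourierTransform in
lemma Continuous.angularFourier_inversion {u : ℝ → ℂ} (hc : Continuous u) (hu : Integrable u)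
    (hw : Integrable (angularFourier u)) (x : ℝ) :
    (1 / (2 * π) : ℂ) * ∫ lam : ℝ, Complex.exp (Complex.I * lam * x) * angularFourier u lam =
      u x := by
  have hFu : 𝓕 u = fun s => angularFourier u (2 * π * s) := funext (fourier_eq_angularFourier u)
  have hrescale := Measure.integral_comp_mul_left
    (fun lam : ℝ => Complex.exp (Complex.I * lam * x) * angularFourier u lam) (2 * π)
  rw [← congrFun (hc.fourierInv_fourier_eq hu (hFu ▸ hw.comp_mul_left' (by positivity))) x,
    Real.fourierInv_eq', hFu]
  simp only [RCLike.inner_apply, conj_trivial, smul_eq_mul] at hrescale ⊢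
  push_cast at hrescale ⊢
  rw [abs_of_pos (by positivity)] at hrescale
  have hphase (v : ℝ) : (2 * π * (x * v) * Complex.I : ℂ) = Complex.I * (2 * π * v) * x := by ring
  simp_rw [hphase, hrescale, Complex.real_smul]
  push_cast
  ring

lemma MeasureTheory.Integrable.of_cexp_mul_sq {τ : ℝ} (hτ : 0 ≤ τ) {w : ℝ → ℂ}
    (h : Integrable fun lam : ℝ => Complex.exp (τ * lam ^ 2) * w lam) : Integrable w := by
  have hw : w = fun lam : ℝ =>
      Complex.exp (-(τ * lam ^ 2)) * (Complex.exp (τ * lam ^ 2) * w lam) := by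
    funext lam
    rw [← mul_assoc, ← Complex.exp_add, neg_add_cancel, Complex.exp_zero, one_mul]
  rw [hw]
  refine h.bdd_mul (c := 1) (by fun_prop) (ae_of_all _ fun lam => ?_)
  rw [Complex.norm_exp, Real.exp_le_one_iff]
  simp only [Complex.neg_re]
  norm_cast
  nlinarith [sq_nonneg lam]

lemma integral_mul_integral_cexp_mul_comm {g h : ℝ → ℂ} (hg : Integrable g) (hh : Integrable h) :
    ∫ ξ : ℝ, g ξ * ∫ lam : ℝ, Complex.exp (Complex.I * lam * ξ) * h lam =
      ∫ lam : ℝ, (∫ ξ : ℝ, g ξ * Complex.exp (Complex.I * lam * ξ)) * h lam := by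
  have hF : Integrable (fun p : ℝ × ℝ => Complex.exp (Complex.I * p.2 * p.1) * (g p.1 * h p.2))
      (volume.prod volume) :=
    (hg.mul_prod hh).bdd_mul (c := 1) (by fun_prop) (ae_of_all _ fun p => by
      rw [mul_assoc, ← Complex.ofReal_mul, Complex.norm_exp_I_mul_ofReal])
  simp_rw [← integral_const_mul, ← integral_mul_const]
  rw [integral_integral_swap (hF.congr (ae_of_all _ fun p => by simp only [Function.uncurry]; ring))]
  simp_rw [mul_assoc]

theorem retrospective_heat_existence_general
    (τ : ℝ) (hτ : 0 < τ) (u : ℝ → ℂ)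
    (hu : Integrable u) (hu_cont : Continuous u)
    (w : ℝ → ℂ)
    (hw : ∀ lam : ℝ, w lam = ∫ ξ : ℝ, Complex.exp (-Complex.I * lam * ξ) * u ξ)
    (hw_int : Integrable (fun lam : ℝ => Complex.exp (τ * lam ^ 2) * w lam))
    (f : ℝ → ℂ)
    (hf : ∀ x : ℝ, f x = (1 / (2 * π) : ℂ) *
      ∫ lam : ℝ, Complex.exp (τ * lam ^ 2) * Complex.exp (Complex.I * lam * x) * w lam) :
    ∀ x : ℝ,
      (∫ ξ : ℝ, (1 / (2 * Real.sqrt (π * τ)) : ℂ) *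
          Complex.exp (-(((x : ℂ) - ξ) ^ 2) / (4 * τ)) * f ξ) = u x := by
  intro x
  obtain rfl : w = angularFourier u := funext hw
  calc ∫ ξ : ℝ, (1 / (2 * Real.sqrt (π * τ)) : ℂ) *
          Complex.exp (-(((x : ℂ) - ξ) ^ 2) / (4 * τ)) * f ξ
      = (1 / (2 * π) : ℂ) * ∫ ξ : ℝ, heatKernel τ (x - ξ) * ∫ lam : ℝ,
          Complex.exp (Complex.I * lam * ξ) * (Complex.exp (τ * lam ^ 2) * angularFourier u lam) := by
        rw [← integral_const_mul]
        congr 1 with ξ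
        have hreorder : ∫ lam : ℝ, Complex.exp (τ * lam ^ 2) * Complex.exp (Complex.I * lam * ξ) *
            angularFourier u lam = ∫ lam : ℝ, Complex.exp (Complex.I * lam * ξ) *
            (Complex.exp (τ * lam ^ 2) * angularFourier u lam) := by
          congr 1 with lam
          ring
        rw [hf, heatKernel, Complex.ofReal_sub, hreorder]
        ring
    _ = (1 / (2 * π) : ℂ) * ∫ lam : ℝ, (∫ ξ : ℝ, heatKernel τ (x - ξ) *
          Complex.exp (Complex.I * lam * ξ)) * (Complex.exp (τ * lam ^ 2) * angularFourier u lam) := by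
        rw [integral_mul_integral_cexp_mul_comm (integrable_heatKernel_sub hτ x) hw_int]
    _ = (1 / (2 * π) : ℂ) * ∫ lam : ℝ, Complex.exp (Complex.I * lam * x) * angularFourier u lam := by
        congr 2 with lam
        have hcancel : Complex.exp (-(τ * lam ^ 2)) * Complex.exp (τ * lam ^ 2) = 1 := by
          rw [← Complex.exp_add, neg_add_cancel, Complex.exp_zero]
        rw [integral_heatKernel_sub_mul_cexp hτ x]
        linear_combination Complex.exp (Complex.I * lam * x) * angularFourier u lam * hcancel
    _ = u x := hu_cont.angularFourier_inversion hu (hw_int.of_cexp_mul_sq hτ.le) x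

/-- Existence for the retrospective heat problem on the line: the Fourier
inversion formula with the regularizing factor `exp(τλ²)` produces an initial
distribution `f` whose heat evolution at time `τ` is `u`. -/
theorem retrospective_heat_existence
    (τ : ℝ) (hτ : 0 < τ) (u : ℝ → ℂ)
    (hu : Integrable u) (hu_cont : Continuous u)
    (w : ℝ → ℂ)
    (hw : ∀ lam : ℝ, w lam = ∫ ξ : ℝ, Complex.exp (-Complex.I * lam * ξ) * u ξ)
    (hw_int : Integrable (fun lam : ℝ => Complex.exp (τ * lam ^ 2) * w lam))
    (f : ℝ → ℂ)
    (hf : ∀ x : ℝ, f x = (1 / (2 * π) : ℂ) *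
      ∫ lam : ℝ, Complex.exp (τ * lam ^ 2) * Complex.exp (Complex.I * lam * x) * w lam)
    (hf_int : Integrable f) :
    ∀ x : ℝ,
      (∫ ξ : ℝ, (1 / (2 * Real.sqrt (π * τ)) : ℂ) *
          Complex.exp (-(((x : ℂ) - ξ) ^ 2) / (4 * τ)) * f ξ) = u x :=
  retrospective_heat_existence_general τ hτ u hu hu_cont w hw hw_int f hf
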